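/- Let n, m, k : ℕ, let Φ_X : Matrix (Fin n) (Fin k) ℝ with Φ_Xᵀ * Φ_X invertible, let Φ_Y : Matrix (Fin m) (Fin k) ℝ, and let Π : Matrix (Fin n) (Fin m) ℝ. Define the functional map C := (Φ_Xᵀ * Φ_X)⁻¹ * Φ_Xᵀ * Π * Φ_Y (i.e., C = Φ_X† * Π * Φ_Y) and the aligning transformation A := Cᵀ. Then A solves the embedding-alignment least-squares problem: for every B : Matrix (Fin k) (Fin k) ℝ, ∑ i, ∑ j, ((Φ_X * Aᵀ - Π * Φ_Y) i j)^2 ≤ ∑ i, ∑ j, ((Φ_X * Bᵀ - Π * Φ_Y) i j)^2. In other words, the optimal linear transformation aligning the embedding Φ_X with the pulled-back embedding Π * Φ_Y is the transpose of the functional map matrix C in the opposite direction. -/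

import Mathlib

/-!
Least squares via the normal equations. Writing `P := Φ_X† (Π Φ_Y)`, the residual
`R := Φ_X P - Π Φ_Y` satisfies `Φ_Xᵀ R = 0`, so it is Frobenius-orthogonal to every matrix of the
form `Φ_X Q`. Since `Φ_X Bᵀ - Π Φ_Y = R + Φ_X (Bᵀ - P)`, Pythagoras gives
`‖Φ_X Bᵀ - Π Φ_Y‖² = ‖R‖² + ‖Φ_X (Bᵀ - P)‖² ≥ ‖R‖²`, and `P = Cᵀᵀ`.
-/

open Matrix

namespace Matrix

variable {α : Type*} [CommRing α] {l m n : Type*} [Fintype m] [Fintype n]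

theorem sum_sum_sq_add_mul_of_transpose_mul_eq_zero [Fintype l] {M : Matrix m n α}
    {R : Matrix m l α} (h : Mᵀ * R = 0) (Q : Matrix n l α) :
    ∑ i, ∑ j, ((R + M * Q) i j) ^ 2 = ∑ i, ∑ j, (R i j) ^ 2 + ∑ i, ∑ j, ((M * Q) i j) ^ 2 := by
  have hcross : ∑ i, ∑ j, R i j * (M * Q) i j = 0 := by
    change trace (R * (M * Q)ᵀ) = 0
    rw [transpose_mul, trace_mul_comm, Matrix.mul_assoc, h, Matrix.mul_zero, trace_zero]
  have hsq : ∀ i j, ((R + M * Q) i j) ^ 2 =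
      (R i j) ^ 2 + ((M * Q) i j) ^ 2 + 2 * (R i j * (M * Q) i j) := by
    intro i j
    rw [add_apply]
    ring
  simp only [hsq, Finset.sum_add_distrib, ← Finset.mul_sum, hcross, mul_zero, add_zero]

theorem sum_sum_sq_sub_le_of_normal_eq [Fintype l] [LinearOrder α] [IsStrictOrderedRing α]
    {M : Matrix m n α} {E : Matrix m l α} {P : Matrix n l α} (h : Mᵀ * (M * P - E) = 0)
    (Q : Matrix n l α) :
    ∑ i, ∑ j, ((M * P - E) i j) ^ 2 ≤ ∑ i, ∑ j, ((M * Q - E) i j) ^ 2 := by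
  have hdecomp : M * Q - E = (M * P - E) + M * (Q - P) := by
    rw [Matrix.mul_sub]
    abel
  rw [hdecomp, sum_sum_sq_add_mul_of_transpose_mul_eq_zero h]
  exact le_add_of_nonneg_right (by positivity)

theorem transpose_mul_sub_mul_pinv_eq_zero [DecidableEq n] {M : Matrix m n α}
    (hM : IsUnit (Mᵀ * M)) (E : Matrix m l α) :
    Mᵀ * (M * ((Mᵀ * M)⁻¹ * Mᵀ * E) - E) = 0 := by
  rw [Matrix.mul_sub, ← Matrix.mul_assoc, Matrix.mul_assoc (Mᵀ * M)⁻¹,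
    mul_nonsing_inv_cancel_left _ _ ((isUnit_iff_isUnit_det _).mp hM), sub_self]

end Matrix

/-- The transpose of the functional map `C = Φ_X† * Pmap * Φ_Y` solves the
embedding-alignment least-squares problem `min_A ‖Φ_X * Aᵀ - Π * Φ_Y‖_F²`. -/
theorem adjoint_is_transpose_of_functional_map {n m k : ℕ}
    (ΦX : Matrix (Fin n) (Fin k) ℝ) (hΦX : IsUnit (ΦXᵀ * ΦX))
    (ΦY : Matrix (Fin m) (Fin k) ℝ) (Pmap : Matrix (Fin n) (Fin m) ℝ)
    (C : Matrix (Fin k) (Fin k) ℝ) (hC : C = (ΦXᵀ * ΦX)⁻¹ * ΦXᵀ * Pmap * ΦY)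
    (A : Matrix (Fin k) (Fin k) ℝ) (hA : A = Cᵀ)
    (B : Matrix (Fin k) (Fin k) ℝ) :
    ∑ i, ∑ j, ((ΦX * Aᵀ - Pmap * ΦY) i j) ^ 2 ≤
      ∑ i, ∑ j, ((ΦX * Bᵀ - Pmap * ΦY) i j) ^ 2 := by
  subst hC hA
  rw [transpose_transpose, Matrix.mul_assoc _ Pmap ΦY]
  exact sum_sum_sq_sub_le_of_normal_eq (transpose_mul_sub_mul_pinv_eq_zero hΦX _) Bᵀ
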